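/- Let D_X and D_Y be symmetric positive definite n×n real matrices. Then the maximum of h(P) = ⟨P, D_Y P D_X⟩ over the set of doubly stochastic matrices is attained at a permutation matrix; in particular max over bistochastic matrices equals max over permutation matrices. -/

import Mathlib

open Matrix

/-- Frobenius inner product `⟨A,B⟩ = tr(Aᵀ B)`. -/
noncomputable def frob {m n : ℕ} (A B : Matrix (Fin m) (Fin n) ℝ) : ℝ :=
  (Aᵀ * B).trace

/-- `P` is a permutation matrix. -/
def IsPermMatrix {n : ℕ} (P : Matrix (Fin n) (Fin n) ℝ) : Prop :=
  ∃ σ : Equiv.Perm (Fin n), P = σ.permMatrix ℝ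

lemma trace_nonneg_of_posSemidef {n : ℕ} {A : Matrix (Fin n) (Fin n) ℝ}
    (hA : A.PosSemidef) : 0 ≤ A.trace := by
  rw [Matrix.trace]
  apply Finset.sum_nonneg
  intro i _
  exact hA.diag_nonneg

lemma key_nonneg {n : ℕ} (DX DY : Matrix (Fin n) (Fin n) ℝ) (hX : DX.PosSemidef)
    (hY : DY.PosSemidef) (M : Matrix (Fin n) (Fin n) ℝ) :
    0 ≤ (Mᵀ * (DY * M * DX)).trace := by
  have hA : (Mᵀ * DY * M).PosSemidef := by
    have := hY.conjTranspose_mul_mul_same M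
    rwa [conjTranspose_eq_transpose_of_trivial] at this
  open MatrixOrder in
  set S := CFC.sqrt DX with hS
  open MatrixOrder in
  have hSS : S * S = DX := CFC.sqrt_mul_sqrt_self DX (Matrix.nonneg_iff_posSemidef.mpr hX)
  have hSherm : Sᵀ = S := by
    open MatrixOrder in
    have := (Matrix.nonneg_iff_posSemidef.mp (CFC.sqrt_nonneg DX)).isHermitian.eq
    rwa [conjTranspose_eq_transpose_of_trivial] at this
  have h1 : (Mᵀ * (DY * M * DX)).trace = (S * (Mᵀ * DY * M) * S).trace := by
    rw [Matrix.trace_mul_cycle S (Mᵀ * DY * M) S, Matrix.trace_mul_comm (S * S), hSS]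
    simp only [Matrix.mul_assoc]
  rw [h1]
  apply trace_nonneg_of_posSemidef
  have := hA.conjTranspose_mul_mul_same S
  rwa [conjTranspose_eq_transpose_of_trivial, hSherm] at this

lemma frob_symm {n : ℕ} (DX DY : Matrix (Fin n) (Fin n) ℝ) (hX : DXᵀ = DX) (hY : DYᵀ = DY)
    (P Q : Matrix (Fin n) (Fin n) ℝ) :
    frob P (DY * Q * DX) = frob Q (DY * P * DX) := by
  unfold frob
  conv_lhs => rw [← Matrix.trace_transpose]
  simp only [Matrix.transpose_mul, Matrix.transpose_transpose, hX, hY, Matrix.mul_assoc]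
  rw [Matrix.trace_mul_comm]
  simp only [Matrix.mul_assoc]

lemma convexOn_h {n : ℕ} (DX DY : Matrix (Fin n) (Fin n) ℝ) (hX : DX.PosDef) (hY : DY.PosDef) :
    ConvexOn ℝ Set.univ (fun P : Matrix (Fin n) (Fin n) ℝ => frob P (DY * P * DX)) := by
  have hXs : DXᵀ = DX := by
    have := hX.isHermitian.eq; rwa [conjTranspose_eq_transpose_of_trivial] at this
  have hYs : DYᵀ = DY := by
    have := hY.isHermitian.eq; rwa [conjTranspose_eq_transpose_of_trivial] at this
  refine ⟨convex_univ, fun P _ Q _ a b ha hb hab => ?_⟩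
  -- expand the quadratic
  have expand : ∀ R S : Matrix (Fin n) (Fin n) ℝ,
      frob (R + S) (DY * (R + S) * DX)
        = frob R (DY * R * DX) + frob R (DY * S * DX) + frob S (DY * R * DX)
          + frob S (DY * S * DX) := by
    intro R S
    unfold frob
    simp only [Matrix.transpose_add, Matrix.add_mul, Matrix.mul_add, Matrix.trace_add]
    ring
  have hsmul : ∀ (c d : ℝ) (R S : Matrix (Fin n) (Fin n) ℝ),
      frob (c • R) (DY * (d • S) * DX) = c * d * frob R (DY * S * DX) := by
    intro c d R S
    unfold frob
    simp only [Matrix.transpose_smul, Matrix.smul_mul, Matrix.mul_smul, Matrix.trace_smul,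
      smul_eq_mul, smul_smul]
    ring
  have hcross : frob P (DY * Q * DX) + frob Q (DY * P * DX)
      ≤ frob P (DY * P * DX) + frob Q (DY * Q * DX) := by
    have h0 := key_nonneg DX DY hX.posSemidef hY.posSemidef (P - Q)
    have : (0:ℝ) ≤ frob (P - Q) (DY * (P - Q) * DX) := by
      unfold frob; rw [Matrix.mul_assoc] at h0 ⊢; exact h0
    rw [show P - Q = P + (-1 : ℝ) • Q by simp [sub_eq_add_neg]] at this
    rw [expand] at this
    have e1 := hsmul 1 (-1) P Q
    have e2 := hsmul (-1) 1 Q P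
    have e3 := hsmul (-1) (-1) Q Q
    simp only [one_smul] at e1 e2 e3
    rw [e1, e2, e3] at this
    linarith
  have key := expand (a • P) (b • Q)
  simp only [hsmul] at key
  simp only [smul_eq_mul]
  rw [key]
  have h2 : a * b * frob P (DY * Q * DX) + b * a * frob Q (DY * P * DX)
      ≤ a * b * (frob P (DY * P * DX) + frob Q (DY * Q * DX)) := by
    have hab' : 0 ≤ a * b := mul_nonneg ha hb
    nlinarith [hcross]
  have h3 : a * a * frob P (DY * P * DX) + a * b * (frob P (DY * P * DX) + frob Q (DY * Q * DX))
      + b * b * frob Q (DY * Q * DX) = a * frob P (DY * P * DX) + b * frob Q (DY * Q * DX) := by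
    linear_combination (a * frob P (DY * P * DX) + b * frob Q (DY * Q * DX)) * hab
  linarith

theorem stmt1 {n : ℕ} (DX DY : Matrix (Fin n) (Fin n) ℝ) (hX : DX.PosDef) (hY : DY.PosDef) :
    ∃ σ : Equiv.Perm (Fin n),
      (σ.permMatrix ℝ) ∈ doublyStochastic ℝ (Fin n) ∧
      ∀ P ∈ doublyStochastic ℝ (Fin n),
        frob P (DY * P * DX) ≤ frob (σ.permMatrix ℝ) (DY * (σ.permMatrix ℝ) * DX) := by
  classical
  -- choose the best permutation
  obtain ⟨σ, -, hσmax⟩ := Finset.exists_max_image (Finset.univ : Finset (Equiv.Perm (Fin n)))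
    (fun τ => frob (τ.permMatrix ℝ) (DY * (τ.permMatrix ℝ) * DX)) ⟨1, Finset.mem_univ 1⟩
  refine ⟨σ, permMatrix_mem_doublyStochastic, ?_⟩
  intro P hP
  have hconv := convexOn_h DX DY hX hY
  have hP' : P ∈ convexHull ℝ {M | ∃ τ : Equiv.Perm (Fin n), τ.permMatrix ℝ = M} := by
    rw [← doublyStochastic_eq_convexHull_permMatrix]; exact hP
  obtain ⟨Q, hQ, hle⟩ := hconv.exists_ge_of_mem_convexHull (Set.subset_univ _) hP'
  obtain ⟨τ, rfl⟩ := hQ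
  exact hle.trans (hσmax τ (Finset.mem_univ τ))
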